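/- arXiv:2411.00951 — 3 statements merged into one kernel-verified Lean document; each statement's English description precedes it below -/
import Mathlib

section
/- For every choice of finite nonempty sets A, B, X, Y, every q ∈ [0,1], and every causal conditional probability distribution P = q·P1 + (1−q)·P2, where P1(a, b | x, y) is nonnegative, normalized, and satisfies that Σ_b P1(a, b | x, y) is independent of y, and P2(a, b | x, y) is nonnegative, normalized, and satisfies that Σ_a P2(a, b | x, y) is independent of x, there exist finite nonempty wire index sets, sets of probabilistic local operations T^{A|X} on Alice's wires and T^{B|Y} on Bob's wires, and a causally separable boxworld process W = q·W1 + (1−q)·W2 — where W1 is a boxworld process with W1 = _{O'_B}W1 and W2 is a boxworld process with W2 = _{O'_A}W2 — such that (T^{A|X} ⊗ T^{B|Y}) * W = P. -/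
open Finset
open scoped Classical

noncomputable section

namespace Boxworld

/-- A bipartite 8-wire tensor `W(i'_A, o_A, i'_B, o_B | i_A, o'_A, i_B, o'_B)`,
with output indices `IA' OA IB' OB` and input indices `IA OA' IB OB'`. -/
abbrev WTen (IA' OA IB' OB IA OA' IB OB' : Type) : Type :=
  IA' → OA → IB' → OB → IA → OA' → IB → OB' → ℝ

/-- A local-operation tensor `T(i, o' | i', o)`, argument order `(i', o, i, o')`. -/
abbrev OpTen (I' O I O' : Type) : Type := I' → O → I → O' → ℝ

section WireDefs

variable {IA' OA IB' OB IA OA' IB OB' : Type}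
variable [Fintype IA'] [Fintype OA] [Fintype IB'] [Fintype OB]
variable [Fintype IA] [Fintype OA'] [Fintype IB] [Fintype OB']

/-- Reduce-and-replace over the index `IA'`. -/
def rrIA' (W : WTen IA' OA IB' OB IA OA' IB OB') : WTen IA' OA IB' OB IA OA' IB OB' :=
  fun _ oa ib' ob ia oa' ib ob' => (∑ j, W j oa ib' ob ia oa' ib ob') / (Fintype.card IA' : ℝ)

/-- Reduce-and-replace over the index `OA`. -/
def rrOA (W : WTen IA' OA IB' OB IA OA' IB OB') : WTen IA' OA IB' OB IA OA' IB OB' :=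
  fun ia' _ ib' ob ia oa' ib ob' => (∑ j, W ia' j ib' ob ia oa' ib ob') / (Fintype.card OA : ℝ)

/-- Reduce-and-replace over the index `IB'`. -/
def rrIB' (W : WTen IA' OA IB' OB IA OA' IB OB') : WTen IA' OA IB' OB IA OA' IB OB' :=
  fun ia' oa _ ob ia oa' ib ob' => (∑ j, W ia' oa j ob ia oa' ib ob') / (Fintype.card IB' : ℝ)

/-- Reduce-and-replace over the index `OB`. -/
def rrOB (W : WTen IA' OA IB' OB IA OA' IB OB') : WTen IA' OA IB' OB IA OA' IB OB' :=
  fun ia' oa ib' _ ia oa' ib ob' => (∑ j, W ia' oa ib' j ia oa' ib ob') / (Fintype.card OB : ℝ)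

/-- Reduce-and-replace over the index `IA`. -/
def rrIA (W : WTen IA' OA IB' OB IA OA' IB OB') : WTen IA' OA IB' OB IA OA' IB OB' :=
  fun ia' oa ib' ob _ oa' ib ob' => (∑ j, W ia' oa ib' ob j oa' ib ob') / (Fintype.card IA : ℝ)

/-- Reduce-and-replace over the index `OA'`. -/
def rrOA' (W : WTen IA' OA IB' OB IA OA' IB OB') : WTen IA' OA IB' OB IA OA' IB OB' :=
  fun ia' oa ib' ob ia _ ib ob' => (∑ j, W ia' oa ib' ob ia j ib ob') / (Fintype.card OA' : ℝ)

/-- Reduce-and-replace over the index `IB`. -/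
def rrIB (W : WTen IA' OA IB' OB IA OA' IB OB') : WTen IA' OA IB' OB IA OA' IB OB' :=
  fun ia' oa ib' ob ia oa' _ ob' => (∑ j, W ia' oa ib' ob ia oa' j ob') / (Fintype.card IB : ℝ)

/-- Reduce-and-replace over the index `OB'`. -/
def rrOB' (W : WTen IA' OA IB' OB IA OA' IB OB') : WTen IA' OA IB' OB IA OA' IB OB' :=
  fun ia' oa ib' ob ia oa' ib _ => (∑ j, W ia' oa ib' ob ia oa' ib j) / (Fintype.card OB' : ℝ)

/-- Total reduction `r(W)`: the sum of all entries of `W`. -/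
def tot (W : WTen IA' OA IB' OB IA OA' IB OB') : ℝ :=
  ∑ ia', ∑ oa, ∑ ib', ∑ ob, ∑ ia, ∑ oa', ∑ ib, ∑ ob', W ia' oa ib' ob ia oa' ib ob'

/-- Elementwise nonnegativity `W ≥ 0`. -/
def Nonneg8 (W : WTen IA' OA IB' OB IA OA' IB OB') : Prop :=
  ∀ ia' oa ib' ob ia oa' ib ob', 0 ≤ W ia' oa ib' ob ia oa' ib ob'

/-- Reduce-and-replace over all of Alice's indices `𝔸 = I'_A I_A O_A O'_A`. -/
def rrA (W : WTen IA' OA IB' OB IA OA' IB OB') : WTen IA' OA IB' OB IA OA' IB OB' :=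
  rrIA' (rrIA (rrOA (rrOA' W)))

/-- Reduce-and-replace over all of Bob's indices `𝔹 = I'_B I_B O_B O'_B`. -/
def rrB (W : WTen IA' OA IB' OB IA OA' IB OB') : WTen IA' OA IB' OB IA OA' IB OB' :=
  rrIB' (rrIB (rrOB (rrOB' W)))

/-- The combination `_{(1 − O'_A + O_A O'_A − I_A O_A O'_A)}W`. -/
def LA (W : WTen IA' OA IB' OB IA OA' IB OB') : WTen IA' OA IB' OB IA OA' IB OB' :=
  W - rrOA' W + rrOA (rrOA' W) - rrIA (rrOA (rrOA' W))

/-- The combination `_{(1 − O'_B + O_B O'_B − I_B O_B O'_B)}W`. -/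
def LB (W : WTen IA' OA IB' OB IA OA' IB OB') : WTen IA' OA IB' OB IA OA' IB OB' :=
  W - rrOB' W + rrOB (rrOB' W) - rrIB (rrOB (rrOB' W))

/-- A bipartite process tensor. -/
def IsProcessTensor (W : WTen IA' OA IB' OB IA OA' IB OB') : Prop :=
  Nonneg8 W ∧
  tot W = (Fintype.card IA : ℝ) * (Fintype.card OA' : ℝ) *
      (Fintype.card IB : ℝ) * (Fintype.card OB' : ℝ) ∧
  rrA (LB W) = 0 ∧
  rrB (LA W) = 0 ∧
  LA (LB W) = 0

/-- Reduce-and-replace over all primed indices `O'_A O'_B I'_A I'_B`. -/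
def rrPrimes (W : WTen IA' OA IB' OB IA OA' IB OB') : WTen IA' OA IB' OB IA OA' IB OB' :=
  rrOA' (rrOB' (rrIA' (rrIB' W)))

/-- The combination `_{(1 − O'_A + O'_A I'_A − O'_B O'_A I'_A)}W`. -/
def MA (W : WTen IA' OA IB' OB IA OA' IB OB') : WTen IA' OA IB' OB IA OA' IB OB' :=
  W - rrOA' W + rrIA' (rrOA' W) - rrOB' (rrIA' (rrOA' W))

/-- The combination `_{(1 − O'_B + O'_B I'_B − O'_A O'_B I'_B)}W`. -/
def MB (W : WTen IA' OA IB' OB IA OA' IB OB') : WTen IA' OA IB' OB IA OA' IB OB' :=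
  W - rrOB' W + rrIB' (rrOB' W) - rrOA' (rrIB' (rrOB' W))

/-- The four nonsignaling-preservation (NSP) conditions. -/
def SatisfiesNSP (W : WTen IA' OA IB' OB IA OA' IB OB') : Prop :=
  rrOA (rrPrimes W) = rrIA (rrOA (rrPrimes W)) ∧
  rrOB (rrPrimes W) = rrIB (rrOB (rrPrimes W)) ∧
  rrOA (MA W) = rrIA (rrOA (MA W)) ∧
  rrOB (MB W) = rrIB (rrOB (MB W))

/-- A boxworld process. -/
def IsBoxworldProcess (W : WTen IA' OA IB' OB IA OA' IB OB') : Prop :=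
  Nonneg8 W ∧
  tot W = (Fintype.card IA : ℝ) * (Fintype.card OA' : ℝ) *
      (Fintype.card IB : ℝ) * (Fintype.card OB' : ℝ) ∧
  rrA W = rrOB' (rrA W) ∧
  rrB W = rrOA' (rrB W) ∧
  W = rrOA' W + rrOB' W - rrOA' (rrOB' W) ∧
  rrOA W = rrIA (rrOA W) ∧
  rrOB W = rrIB (rrOB W)

/-- The action `W * P` of a process tensor on a bipartite box
`P(o'_A, o'_B | i'_A, i'_B)`, contracting the indices `O'_A, O'_B, I'_A, I'_B`. -/
def actOnBox (W : WTen IA' OA IB' OB IA OA' IB OB')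
    (P : OA' → OB' → IA' → IB' → ℝ) : OA → OB → IA → IB → ℝ :=
  fun oa ob ia ib =>
    ∑ ia', ∑ ib', ∑ oa', ∑ ob', W ia' oa ib' ob ia oa' ib ob' * P oa' ob' ia' ib'

end WireDefs

section OpDefs

variable {I' O I O' : Type}
variable [Fintype I'] [Fintype O] [Fintype I] [Fintype O']

/-- Reduce-and-replace over the index `I'` of an operation tensor. -/
def rrOpI' (T : OpTen I' O I O') : OpTen I' O I O' :=
  fun _ o i o' => (∑ j, T j o i o') / (Fintype.card I' : ℝ)

/-- Reduce-and-replace over the index `O` of an operation tensor. -/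
def rrOpO (T : OpTen I' O I O') : OpTen I' O I O' :=
  fun i' _ i o' => (∑ j, T i' j i o') / (Fintype.card O : ℝ)

/-- Reduce-and-replace over the index `I` of an operation tensor. -/
def rrOpI (T : OpTen I' O I O') : OpTen I' O I O' :=
  fun i' o _ o' => (∑ j, T i' o j o') / (Fintype.card I : ℝ)

/-- Reduce-and-replace over the index `O'` of an operation tensor. -/
def rrOpO' (T : OpTen I' O I O') : OpTen I' O I O' :=
  fun i' o i _ => (∑ j, T i' o i j) / (Fintype.card O' : ℝ)

/-- Total reduction of an operation tensor. -/
def totOp (T : OpTen I' O I O') : ℝ := ∑ i', ∑ o, ∑ i, ∑ o', T i' o i o'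

/-- A deterministic local operation. -/
def IsDetOp (T : OpTen I' O I O') : Prop :=
  totOp T = (Fintype.card I' : ℝ) * (Fintype.card O : ℝ) ∧
  rrOpI (rrOpO' T) = rrOpI' (rrOpI (rrOpO (rrOpO' T))) ∧
  rrOpO' T = rrOpO (rrOpO' T)

/-- A set of probabilistic local operations `T^{a|x}(i, o' | i', o)`:
nonnegative tensors whose sum over the classical outcome `a` is, for each
classical input `x`, a deterministic local operation. -/
def IsLocalOps {A X : Type} [Fintype A] (T : A → X → OpTen I' O I O') : Prop :=
  (∀ a x i' o i o', 0 ≤ T a x i' o i o') ∧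
  ∀ x, IsDetOp (fun i' o i o' => ∑ a, T a x i' o i o')

/-- A nonsignaling set of probabilistic local operations: either the
deterministic operation `T^x` is independent of `x` (case 1), or it is a
convex combination of deterministic pre-processings `f_λ` (possibly depending
on `x`) and post-processings `g_λ` independent of both the box output and `x`
(case 2). -/
def IsNSLocalOps {A X : Type} [Fintype A] (T : A → X → OpTen I' O I O') : Prop :=
  IsLocalOps T ∧
  ((∀ x x' i' o i o', (∑ a, T a x i' o i o') = ∑ a, T a x' i' o i o') ∨
    ∃ (m : ℕ) (π : Fin m → ℝ) (f : Fin m → I' → X → I) (g : Fin m → I' → O'),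
      (∀ l, 0 ≤ π l) ∧ (∑ l, π l = 1) ∧
      ∀ x i' o i o', (∑ a, T a x i' o i o') =
        ∑ l, π l * ((if i = f l i' x then (1 : ℝ) else 0) *
          (if o' = g l i' then (1 : ℝ) else 0)))

end OpDefs

/-- A bipartite nonsignaling box `P(o_1, o_2 | i_1, i_2)`. -/
def IsNSBox {O1 O2 I1 I2 : Type} [Fintype O1] [Fintype O2]
    (P : O1 → O2 → I1 → I2 → ℝ) : Prop :=
  (∀ o1 o2 i1 i2, 0 ≤ P o1 o2 i1 i2) ∧
  (∀ i1 i2, ∑ o1, ∑ o2, P o1 o2 i1 i2 = 1) ∧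
  (∀ o1 i1 i2 i2', ∑ o2, P o1 o2 i1 i2 = ∑ o2, P o1 o2 i1 i2') ∧
  (∀ o2 i1 i1' i2, ∑ o1, P o1 o2 i1 i2 = ∑ o1, P o1 o2 i1' i2)

section Corr

variable {IA' OA IB' OB IA OA' IB OB' : Type}
variable [Fintype IA'] [Fintype OA] [Fintype IB'] [Fintype OB]
variable [Fintype IA] [Fintype OA'] [Fintype IB] [Fintype OB']
variable {A X B Y : Type}

/-- The correlations `(T^{A|X} ⊗ T^{B|Y}) * W` generated by local operations
acting on a process tensor: contraction over all eight wire indices. -/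
def corr (TA : A → X → OpTen IA' OA IA OA') (TB : B → Y → OpTen IB' OB IB OB')
    (W : WTen IA' OA IB' OB IA OA' IB OB') (a : A) (b : B) (x : X) (y : Y) : ℝ :=
  ∑ ia', ∑ oa, ∑ ib', ∑ ob, ∑ ia, ∑ oa', ∑ ib, ∑ ob',
    TA a x ia' oa ia oa' * TB b y ib' ob ib ob' * W ia' oa ib' ob ia oa' ib ob'

end Corr


section MyAux

set_option linter.unusedSectionVars false in
lemma myaux_prod_sum_one {X A : Type} [Fintype X] [Fintype A] (p : X → A → ℝ)
    (hp : ∀ x', ∑ c, p x' c = 1) :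
    ∑ f : X → A, ∏ x', p x' (f x') = 1 := by
  classical
  have h2 := Finset.prod_univ_sum (fun _ : X => (univ : Finset A)) p
  rw [Fintype.piFinset_univ] at h2
  rw [← h2]; simp [hp]

set_option linter.unusedSectionVars false in
lemma myaux_sum_prod_pick {X A : Type} [Fintype X] [Fintype A] (p : X → A → ℝ)
    (hp : ∀ x', ∑ c, p x' c = 1) (x : X) (a : A) :
    ∑ f : X → A, (if f x = a then (1:ℝ) else 0) * ∏ x', p x' (f x') = p x a := by
  classical
  have key : ∀ f : X → A, (if f x = a then (1:ℝ) else 0) * ∏ x', p x' (f x')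
      = ∏ x', (if x' = x then (if f x' = a then p x' (f x') else 0) else p x' (f x')) := by
    intro f
    by_cases h : f x = a
    · rw [if_pos h, one_mul]
      refine Finset.prod_congr rfl fun x' _ => ?_
      by_cases hx : x' = x
      · subst hx; rw [if_pos rfl, if_pos h]
      · rw [if_neg hx]
    · rw [if_neg h, zero_mul]
      symm
      apply Finset.prod_eq_zero (Finset.mem_univ x)
      rw [if_pos rfl, if_neg h]
  rw [Finset.sum_congr rfl fun f _ => key f]
  have h2 := Finset.prod_univ_sum (fun _ : X => (univ : Finset A))
      (fun x' c => if x' = x then (if c = a then p x' c else 0) else p x' c)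
  rw [Fintype.piFinset_univ] at h2
  rw [← h2]
  rw [Finset.prod_eq_single x (fun x' _ hx => by simp [hx, hp x'])
      (fun h => absurd (Finset.mem_univ x) h)]
  simp [Finset.sum_ite_eq']

lemma myaux_avg_const {ι : Type} [Fintype ι] [Nonempty ι] (c : ℝ) :
    (∑ _j : ι, c) / (Fintype.card ι : ℝ) = c := by
  rw [Finset.sum_const, Finset.card_univ, nsmul_eq_mul, mul_div_cancel_left₀]
  exact_mod_cast Fintype.card_ne_zero

lemma myaux_ind_sum {α β : Type} [Fintype α] [Fintype β] (e : β ≃ α) (t : α) :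
    ∑ j : β, (if e j = t then (1:ℝ) else 0) = 1 := by
  have h := Fintype.sum_equiv e (fun j => if e j = t then (1:ℝ) else 0)
      (fun s => if s = t then (1:ℝ) else 0) (fun j => rfl)
  rw [h]; simp

lemma myaux_pick_equiv {α β : Type} [Fintype α] [Fintype β] (e : β ≃ α) (t : α) (F : α → ℝ) :
    ∑ j : β, (if e j = t then (1:ℝ) else 0) * F (e j) = F t := by
  have h := Fintype.sum_equiv e (fun j => (if e j = t then (1:ℝ) else 0) * F (e j))
      (fun s => (if s = t then (1:ℝ) else 0) * F s) (fun j => rfl)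
  rw [h]; simp [Finset.sum_ite_eq']

lemma myaux_sum_fin01 (f : Fin (0+1) → ℝ) : ∑ i, f i = f 0 := by
  haveI : Subsingleton (Fin (0+1)) :=
    ⟨fun a b => Fin.ext (by have := a.isLt; have := b.isLt; omega)⟩
  exact Fintype.sum_subsingleton f 0

end MyAux

section MyConstr
variable {A B X Y : Type} [Fintype A] [Fintype B] [Fintype X] [Fintype Y]

/-- Alice marginal of `P` (at fixed reference input `y0`). -/
def margA (P : A → B → X → Y → ℝ) (y0 : Y) (a : A) (x : X) : ℝ := ∑ b, P a b x y0

/-- Conditional distribution of Bob's outcome given Alice's. -/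
def cndB (P : A → B → X → Y → ℝ) (y0 : Y) (b : B) (a : A) (x : X) (y : Y) : ℝ :=
  if margA P y0 a x = 0 then (Fintype.card B : ℝ)⁻¹ else P a b x y / margA P y0 a x

/-- The raw process distribution over pairs of response functions. -/
def Wr (P : A → B → X → Y → ℝ) (y0 : Y) (f : X → A) (g : Y → B) (x : X) : ℝ :=
  (∏ x', margA P y0 (f x') x') * ∏ y', cndB P y0 (g y') (f x) x y'

variable {P : A → B → X → Y → ℝ} {y0 : Y}
variable (hpos : ∀ a b x y, 0 ≤ P a b x y)
variable (hnorm : ∀ x y, ∑ a, ∑ b, P a b x y = 1)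
variable (hns : ∀ a x y y', ∑ b, P a b x y = ∑ b, P a b x y')

set_option linter.unusedSectionVars false

include hpos in
lemma margA_nonneg (a : A) (x : X) : 0 ≤ margA P y0 a x :=
  Finset.sum_nonneg fun b _ => hpos a b x y0

include hnorm in
lemma margA_sum_one (x : X) : ∑ a, margA P y0 a x = 1 := hnorm x y0

include hpos in
lemma cndB_nonneg (b : B) (a : A) (x : X) (y : Y) : 0 ≤ cndB P y0 b a x y := by
  unfold cndB
  split_ifs
  · positivity
  · exact div_nonneg (hpos a b x y) (margA_nonneg hpos a x)

include hpos hns in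
lemma cndB_sum_one [Nonempty B] (a : A) (x : X) (y : Y) : ∑ b, cndB P y0 b a x y = 1 := by
  unfold cndB
  split_ifs with h
  · rw [Finset.sum_const, Finset.card_univ, nsmul_eq_mul, mul_inv_cancel₀]
    exact_mod_cast Fintype.card_ne_zero
  · rw [← Finset.sum_div, show ∑ b, P a b x y = margA P y0 a x from hns a x y y0]
    exact div_self h

include hpos hns in
lemma marg_mul_cnd (a : A) (b : B) (x : X) (y : Y) :
    margA P y0 a x * cndB P y0 b a x y = P a b x y := by
  unfold cndB
  split_ifs with h
  · rw [h, zero_mul]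
    symm
    have h0 : ∑ b', P a b' x y = 0 := by rw [hns a x y y0]; exact h
    exact (Finset.sum_eq_zero_iff_of_nonneg (fun b' _ => hpos a b' x y)).mp h0 b
      (Finset.mem_univ b)
  · rw [mul_div_cancel₀ _ h]

include hpos in
lemma Wr_nonneg (f : X → A) (g : Y → B) (x : X) : 0 ≤ Wr P y0 f g x :=
  mul_nonneg (Finset.prod_nonneg fun x' _ => margA_nonneg hpos _ _)
    (Finset.prod_nonneg fun y' _ => cndB_nonneg hpos _ _ _ _)

include hpos hns in
lemma Wr_sum_g [Nonempty B] (f : X → A) (x : X) :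
    ∑ g : Y → B, Wr P y0 f g x = ∏ x', margA P y0 (f x') x' := by
  unfold Wr
  rw [← Finset.mul_sum,
    myaux_prod_sum_one (fun y' b => cndB P y0 b (f x) x y')
      (fun y' => cndB_sum_one hpos hns _ _ _), mul_one]

include hpos hnorm hns in
lemma Wr_tot [Nonempty B] : ∑ f : X → A, ∑ g : Y → B, ∑ x, Wr P y0 f g x
    = (Fintype.card X : ℝ) := by
  have h1 : ∀ f : X → A, ∑ g : Y → B, ∑ x, Wr P y0 f g x
      = (Fintype.card X : ℝ) * ∏ x', margA P y0 (f x') x' := by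
    intro f
    rw [Finset.sum_comm]
    rw [Finset.sum_congr rfl fun x _ => Wr_sum_g hpos hns f x]
    rw [Finset.sum_const, Finset.card_univ, nsmul_eq_mul]
  rw [Finset.sum_congr rfl fun f _ => h1 f, ← Finset.mul_sum,
    myaux_prod_sum_one (fun x' a => margA P y0 a x') (fun x' => margA_sum_one hnorm x'),
    mul_one]

include hpos hnorm hns in
lemma Wr_corr [Nonempty B] (a : A) (b : B) (x : X) (y : Y) :
    ∑ f : X → A, ∑ g : Y → B, (if f x = a then (1:ℝ) else 0) *
      ((if g y = b then (1:ℝ) else 0) * Wr P y0 f g x) = P a b x y := by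
  have step1 : ∀ f : X → A,
      ∑ g : Y → B, (if f x = a then (1:ℝ) else 0) *
        ((if g y = b then (1:ℝ) else 0) * Wr P y0 f g x)
      = (if f x = a then (1:ℝ) else 0) *
        ((∏ x', margA P y0 (f x') x') * cndB P y0 b (f x) x y) := by
    intro f
    rw [← Finset.mul_sum]
    congr 1
    have hg : ∀ g : Y → B, (if g y = b then (1:ℝ) else 0) * Wr P y0 f g x
        = (∏ x', margA P y0 (f x') x') *
          ((if g y = b then (1:ℝ) else 0) * ∏ y', cndB P y0 (g y') (f x) x y') := by
      intro g; unfold Wr; ring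
    rw [Finset.sum_congr rfl fun g _ => hg g, ← Finset.mul_sum,
      myaux_sum_prod_pick (fun y' c => cndB P y0 c (f x) x y')
        (fun y' => cndB_sum_one hpos hns _ _ _) y b]
  rw [Finset.sum_congr rfl fun f _ => step1 f]
  have step2 : ∀ f : X → A,
      (if f x = a then (1:ℝ) else 0) *
        ((∏ x', margA P y0 (f x') x') * cndB P y0 b (f x) x y)
      = cndB P y0 b a x y *
        ((if f x = a then (1:ℝ) else 0) * ∏ x', margA P y0 (f x') x') := by
    intro f
    by_cases h : f x = a
    · rw [h]; ring
    · simp [h]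
  rw [Finset.sum_congr rfl fun f _ => step2 f, ← Finset.mul_sum,
    myaux_sum_prod_pick (fun x' c => margA P y0 c x') (fun x' => margA_sum_one hnorm x') x a,
    mul_comm]
  exact marg_mul_cnd hpos hns a b x y

end MyConstr

section MyStruct
variable {IA' OA IB' OB IA OA' IB OB' : Type}
variable [Fintype IA'] [Fintype OA] [Fintype IB'] [Fintype OB]
variable [Fintype IA] [Fintype OA'] [Fintype IB] [Fintype OB']

lemma rrOA_id [Subsingleton OA] (W : WTen IA' OA IB' OB IA OA' IB OB') : rrOA W = W := by
  funext ia' oa ib' ob ia oa' ib ob'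
  have h1 : Fintype.card OA = 1 := Fintype.card_eq_one_iff.mpr ⟨oa, fun b => Subsingleton.elim b oa⟩
  simp [rrOA, Fintype.sum_subsingleton _ oa, h1]

lemma rrIA_id [Subsingleton IA] (W : WTen IA' OA IB' OB IA OA' IB OB') : rrIA W = W := by
  funext ia' oa ib' ob ia oa' ib ob'
  have h1 : Fintype.card IA = 1 := Fintype.card_eq_one_iff.mpr ⟨ia, fun b => Subsingleton.elim b ia⟩
  simp [rrIA, Fintype.sum_subsingleton _ ia, h1]

lemma rrOB_id [Subsingleton OB] (W : WTen IA' OA IB' OB IA OA' IB OB') : rrOB W = W := by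
  funext ia' oa ib' ob ia oa' ib ob'
  have h1 : Fintype.card OB = 1 := Fintype.card_eq_one_iff.mpr ⟨ob, fun b => Subsingleton.elim b ob⟩
  simp [rrOB, Fintype.sum_subsingleton _ ob, h1]

lemma rrIB_id [Subsingleton IB] (W : WTen IA' OA IB' OB IA OA' IB OB') : rrIB W = W := by
  funext ia' oa ib' ob ia oa' ib ob'
  have h1 : Fintype.card IB = 1 := Fintype.card_eq_one_iff.mpr ⟨ib, fun b => Subsingleton.elim b ib⟩
  simp [rrIB, Fintype.sum_subsingleton _ ib, h1]

lemma rrOB'_id [Nonempty OB'] (W : WTen IA' OA IB' OB IA OA' IB OB')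
    (h : ∀ ia' oa ib' ob ia oa' ib j j',
      W ia' oa ib' ob ia oa' ib j = W ia' oa ib' ob ia oa' ib j') : rrOB' W = W := by
  funext ia' oa ib' ob ia oa' ib ob'
  show (∑ j, W ia' oa ib' ob ia oa' ib j) / _ = _
  rw [Finset.sum_congr rfl fun j _ => h ia' oa ib' ob ia oa' ib j ob']
  exact myaux_avg_const _

lemma rrOA'_id [Nonempty OA'] (W : WTen IA' OA IB' OB IA OA' IB OB')
    (h : ∀ ia' oa ib' ob ia ib ob' j j',
      W ia' oa ib' ob ia j ib ob' = W ia' oa ib' ob ia j' ib ob') : rrOA' W = W := by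
  funext ia' oa ib' ob ia oa' ib ob'
  show (∑ j, W ia' oa ib' ob ia j ib ob') / _ = _
  rw [Finset.sum_congr rfl fun j _ => h ia' oa ib' ob ia ib ob' j oa']
  exact myaux_avg_const _

end MyStruct

section MyOps
lemma myaux_isDetOp_dirac {I' O O' α : Type} [Fintype I'] [Fintype O] [Fintype O'] [Fintype α]
    [Nonempty I'] [Nonempty O] [Nonempty O']
    (e : O' ≃ α) (t : α) :
    IsDetOp (fun (_ : I') (_ : O) (_ : Fin (0+1)) (o' : O') => if e o' = t then (1:ℝ) else 0) := by
  haveI : Nonempty (Fin (0+1)) := ⟨0⟩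
  have hO' : rrOpO' (fun (_ : I') (_ : O) (_ : Fin (0+1)) (o' : O') => if e o' = t then (1:ℝ) else 0)
      = fun _ _ _ _ => (Fintype.card O' : ℝ)⁻¹ := by
    funext i' o i o'
    show (∑ j, if e j = t then (1:ℝ) else 0) / _ = _
    rw [myaux_ind_sum e t, one_div]
  have hcI : rrOpI (fun (_ : I') (_ : O) (_ : Fin (0+1)) (_ : O') => (Fintype.card O' : ℝ)⁻¹)
      = fun _ _ _ _ => (Fintype.card O' : ℝ)⁻¹ := by
    funext i' o i o'; exact myaux_avg_const _
  have hcI' : rrOpI' (fun (_ : I') (_ : O) (_ : Fin (0+1)) (_ : O') => (Fintype.card O' : ℝ)⁻¹)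
      = fun _ _ _ _ => (Fintype.card O' : ℝ)⁻¹ := by
    funext i' o i o'; exact myaux_avg_const _
  have hcO : rrOpO (fun (_ : I') (_ : O) (_ : Fin (0+1)) (_ : O') => (Fintype.card O' : ℝ)⁻¹)
      = fun _ _ _ _ => (Fintype.card O' : ℝ)⁻¹ := by
    funext i' o i o'; exact myaux_avg_const _
  refine ⟨?_, ?_, ?_⟩
  · show (∑ i' : I', ∑ o : O, ∑ i : Fin (0+1), ∑ o' : O', if e o' = t then (1:ℝ) else 0) = _
    rw [Finset.sum_congr rfl fun i' _ => Finset.sum_congr rfl fun o _ =>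
      Finset.sum_congr rfl fun i _ => myaux_ind_sum e t]
    simp [Finset.sum_const, Finset.card_univ]
  · rw [hO', hcO, hcI, hcI']
  · rw [hO', hcO]
end MyOps


lemma myaux_pick_refl {α : Type} [Fintype α] (t : α) (F : α → ℝ) :
    ∑ j, (if j = t then (1:ℝ) else 0) * F j = F t := by
  simp [ite_mul, Finset.sum_ite_eq']

set_option linter.unusedSectionVars false in
lemma myaux_corr_eval {A B X Y : Type} [Fintype A] [Fintype B] [Fintype X] [Fintype Y]
    {nA nB nX nY : ℕ} (eA : (X → A) ≃ Fin (nA+1)) (eB : (Y → B) ≃ Fin (nB+1))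
    (eX : X ≃ Fin (nX+1)) (eY : Y ≃ Fin (nY+1))
    (V : (X → A) → (Y → B) → X → Y → ℝ) (a : A) (b : B) (x : X) (y : Y) :
    (∑ ia' : Fin (nA+1), ∑ oa : Fin (0+1), ∑ ib' : Fin (nB+1), ∑ ob : Fin (0+1),
      ∑ ia : Fin (0+1), ∑ oa' : Fin (nX+1), ∑ ib : Fin (0+1), ∑ ob' : Fin (nY+1),
      ((if eA.symm ia' x = a then (1:ℝ) else 0) * (if eX.symm oa' = x then 1 else 0)) *
        ((if eB.symm ib' y = b then (1:ℝ) else 0) * (if eY.symm ob' = y then 1 else 0)) *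
        V (eA.symm ia') (eB.symm ib') (eX.symm oa') (eY.symm ob'))
    = ∑ f : X → A, ∑ g : Y → B,
        (if f x = a then (1:ℝ) else 0) * ((if g y = b then (1:ℝ) else 0) * V f g x y) := by
  calc (∑ ia' : Fin (nA+1), ∑ oa : Fin (0+1), ∑ ib' : Fin (nB+1), ∑ ob : Fin (0+1),
      ∑ ia : Fin (0+1), ∑ oa' : Fin (nX+1), ∑ ib : Fin (0+1), ∑ ob' : Fin (nY+1),
      ((if eA.symm ia' x = a then (1:ℝ) else 0) * (if eX.symm oa' = x then 1 else 0)) *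
        ((if eB.symm ib' y = b then (1:ℝ) else 0) * (if eY.symm ob' = y then 1 else 0)) *
        V (eA.symm ia') (eB.symm ib') (eX.symm oa') (eY.symm ob'))
      = ∑ f : X → A, ∑ g : Y → B, ∑ x' : X, ∑ y' : Y,
          ((if f x = a then (1:ℝ) else 0) * (if x' = x then 1 else 0)) *
          ((if g y = b then (1:ℝ) else 0) * (if y' = y then 1 else 0)) * V f g x' y' := by
        refine Fintype.sum_equiv eA.symm _ _ fun ia' => ?_
        simp only [myaux_sum_fin01]
        refine Fintype.sum_equiv eB.symm _ _ fun ib' => ?_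
        refine Fintype.sum_equiv eX.symm _ _ fun oa' => ?_
        exact Fintype.sum_equiv eY.symm _ _ fun ob' => rfl
    _ = ∑ f : X → A, ∑ g : Y → B,
        (if f x = a then (1:ℝ) else 0) * ((if g y = b then (1:ℝ) else 0) * V f g x y) := by
        refine Finset.sum_congr rfl fun f _ => Finset.sum_congr rfl fun g _ => ?_
        have hy : ∀ x' : X, (∑ y' : Y,
            ((if f x = a then (1:ℝ) else 0) * (if x' = x then 1 else 0)) *
            ((if g y = b then (1:ℝ) else 0) * (if y' = y then 1 else 0)) * V f g x' y')
            = (if x' = x then (1:ℝ) else 0) *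
              ((if f x = a then (1:ℝ) else 0) * ((if g y = b then (1:ℝ) else 0) * V f g x' y)) := by
          intro x'
          rw [Finset.sum_congr rfl (fun y' _ => show
            ((if f x = a then (1:ℝ) else 0) * (if x' = x then 1 else 0)) *
            ((if g y = b then (1:ℝ) else 0) * (if y' = y then 1 else 0)) * V f g x' y'
            = (if y' = y then (1:ℝ) else 0) *
              ((if x' = x then (1:ℝ) else 0) *
                ((if f x = a then (1:ℝ) else 0) * ((if g y = b then (1:ℝ) else 0) * V f g x' y')))
            by ring)]
          exact myaux_pick_refl y (fun t => (if x' = x then (1:ℝ) else 0) *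
            ((if f x = a then (1:ℝ) else 0) * ((if g y = b then (1:ℝ) else 0) * V f g x' t)))
        rw [Finset.sum_congr rfl fun x' _ => hy x']
        exact myaux_pick_refl x (fun t => (if f x = a then (1:ℝ) else 0) *
          ((if g y = b then (1:ℝ) else 0) * V f g t y))

set_option linter.unusedSectionVars false in
lemma myaux_pull8 {I1 I2 I3 I4 I5 I6 I7 I8 : Type}
    [Fintype I1] [Fintype I2] [Fintype I3] [Fintype I4]
    [Fintype I5] [Fintype I6] [Fintype I7] [Fintype I8]
    (c : ℝ) (H : I1 → I2 → I3 → I4 → I5 → I6 → I7 → I8 → ℝ) :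
    ∑ i1, ∑ i2, ∑ i3, ∑ i4, ∑ i5, ∑ i6, ∑ i7, ∑ i8, c * H i1 i2 i3 i4 i5 i6 i7 i8
    = c * ∑ i1, ∑ i2, ∑ i3, ∑ i4, ∑ i5, ∑ i6, ∑ i7, ∑ i8, H i1 i2 i3 i4 i5 i6 i7 i8 := by
  simp only [← Finset.mul_sum]

set_option linter.unusedSectionVars false in
lemma myaux_split8 {I1 I2 I3 I4 I5 I6 I7 I8 : Type}
    [Fintype I1] [Fintype I2] [Fintype I3] [Fintype I4]
    [Fintype I5] [Fintype I6] [Fintype I7] [Fintype I8]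
    (F G : I1 → I2 → I3 → I4 → I5 → I6 → I7 → I8 → ℝ) :
    (∑ i1, ∑ i2, ∑ i3, ∑ i4, ∑ i5, ∑ i6, ∑ i7, ∑ i8,
      (F i1 i2 i3 i4 i5 i6 i7 i8 + G i1 i2 i3 i4 i5 i6 i7 i8))
    = (∑ i1, ∑ i2, ∑ i3, ∑ i4, ∑ i5, ∑ i6, ∑ i7, ∑ i8, F i1 i2 i3 i4 i5 i6 i7 i8)
      + (∑ i1, ∑ i2, ∑ i3, ∑ i4, ∑ i5, ∑ i6, ∑ i7, ∑ i8, G i1 i2 i3 i4 i5 i6 i7 i8) := by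
  simp only [Finset.sum_add_distrib]

set_option linter.unusedSectionVars false in
lemma myaux_congr8 {I1 I2 I3 I4 I5 I6 I7 I8 : Type}
    [Fintype I1] [Fintype I2] [Fintype I3] [Fintype I4]
    [Fintype I5] [Fintype I6] [Fintype I7] [Fintype I8]
    (F G : I1 → I2 → I3 → I4 → I5 → I6 → I7 → I8 → ℝ)
    (h : ∀ i1 i2 i3 i4 i5 i6 i7 i8, F i1 i2 i3 i4 i5 i6 i7 i8 = G i1 i2 i3 i4 i5 i6 i7 i8) :
    (∑ i1, ∑ i2, ∑ i3, ∑ i4, ∑ i5, ∑ i6, ∑ i7, ∑ i8, F i1 i2 i3 i4 i5 i6 i7 i8)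
    = ∑ i1, ∑ i2, ∑ i3, ∑ i4, ∑ i5, ∑ i6, ∑ i7, ∑ i8, G i1 i2 i3 i4 i5 i6 i7 i8 := by
  iterate 8 refine Finset.sum_congr rfl fun _ _ => ?_
  exact h _ _ _ _ _ _ _ _

set_option linter.unusedSectionVars false in
lemma myaux_corr_lin {IA' OA IB' OB IA OA' IB OB' : Type}
    [Fintype IA'] [Fintype OA] [Fintype IB'] [Fintype OB]
    [Fintype IA] [Fintype OA'] [Fintype IB] [Fintype OB']
    {A X B Y : Type}
    (TA : A → X → OpTen IA' OA IA OA') (TB : B → Y → OpTen IB' OB IB OB')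
    (W W' : WTen IA' OA IB' OB IA OA' IB OB') (c d : ℝ) (a : A) (b : B) (x : X) (y : Y) :
    corr TA TB (c • W + d • W') a b x y
      = c * corr TA TB W a b x y + d * corr TA TB W' a b x y := by
  unfold corr
  have h8 : (∑ ia' : IA', ∑ oa : OA, ∑ ib' : IB', ∑ ob : OB, ∑ ia : IA, ∑ oa' : OA',
      ∑ ib : IB, ∑ ob' : OB',
      TA a x ia' oa ia oa' * TB b y ib' ob ib ob' *
        (c • W + d • W') ia' oa ib' ob ia oa' ib ob')
      = ∑ ia' : IA', ∑ oa : OA, ∑ ib' : IB', ∑ ob : OB, ∑ ia : IA, ∑ oa' : OA',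
      ∑ ib : IB, ∑ ob' : OB',
      (c * (TA a x ia' oa ia oa' * TB b y ib' ob ib ob' * W ia' oa ib' ob ia oa' ib ob')
        + d * (TA a x ia' oa ia oa' * TB b y ib' ob ib ob' *
            W' ia' oa ib' ob ia oa' ib ob')) := by
    refine myaux_congr8 _ _ fun i1 i2 i3 i4 i5 i6 i7 i8 => ?_
    have hpt : (c • W + d • W') i1 i2 i3 i4 i5 i6 i7 i8
        = c * W i1 i2 i3 i4 i5 i6 i7 i8 + d * W' i1 i2 i3 i4 i5 i6 i7 i8 := rfl
    rw [hpt]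
    ring
  rw [h8, myaux_split8, myaux_pull8, myaux_pull8]


set_option linter.unusedSectionVars false in
lemma myaux_mul_sum3 {α β γ : Type} [Fintype α] [Fintype β] [Fintype γ]
    (c : ℝ) (F : α → β → γ → ℝ) :
    ∑ i, ∑ j, ∑ k, c * F i j k = c * ∑ i, ∑ j, ∑ k, F i j k := by
  simp [Finset.mul_sum]

theorem statement_16
    (A B X Y : Type) [Fintype A] [Nonempty A] [Fintype B] [Nonempty B]
    [Fintype X] [Nonempty X] [Fintype Y] [Nonempty Y]
    (q : ℝ) (hq0 : 0 ≤ q) (hq1 : q ≤ 1)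
    (P1 P2 : A → B → X → Y → ℝ)
    (hP1pos : ∀ a b x y, 0 ≤ P1 a b x y)
    (hP1norm : ∀ x y, ∑ a, ∑ b, P1 a b x y = 1)
    (hP1ns : ∀ a x y y', ∑ b, P1 a b x y = ∑ b, P1 a b x y')
    (hP2pos : ∀ a b x y, 0 ≤ P2 a b x y)
    (hP2norm : ∀ x y, ∑ a, ∑ b, P2 a b x y = 1)
    (hP2ns : ∀ b x x' y, ∑ a, P2 a b x y = ∑ a, P2 a b x' y) :
    ∃ (n1 n2 n3 n4 n5 n6 n7 n8 : ℕ)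
      (TA : A → X → OpTen (Fin (n1+1)) (Fin (n2+1)) (Fin (n5+1)) (Fin (n6+1)))
      (TB : B → Y → OpTen (Fin (n3+1)) (Fin (n4+1)) (Fin (n7+1)) (Fin (n8+1)))
      (W1 W2 : WTen (Fin (n1+1)) (Fin (n2+1)) (Fin (n3+1)) (Fin (n4+1)) (Fin (n5+1)) (Fin (n6+1)) (Fin (n7+1)) (Fin (n8+1))),
      IsLocalOps TA ∧ IsLocalOps TB ∧
      IsBoxworldProcess W1 ∧ W1 = rrOB' W1 ∧
      IsBoxworldProcess W2 ∧ W2 = rrOA' W2 ∧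
      ∀ a b x y, corr TA TB (q • W1 + (1 - q) • W2) a b x y =
        q * P1 a b x y + (1 - q) * P2 a b x y := by
  classical
  obtain ⟨x0⟩ := (inferInstance : Nonempty X)
  obtain ⟨y0⟩ := (inferInstance : Nonempty Y)
  haveI hfin1 : Subsingleton (Fin (0+1)) :=
    ⟨fun a b => Fin.ext (by have := a.isLt; have := b.isLt; omega)⟩
  -- flipped second distribution
  let P2' : B → A → Y → X → ℝ := fun b a y x => P2 a b x y
  have hpos2 : ∀ b a y x, 0 ≤ P2' b a y x := fun b a y x => hP2pos a b x y
  have hnorm2 : ∀ y x, ∑ b, ∑ a, P2' b a y x = 1 := fun y x => by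
    rw [Finset.sum_comm]; exact hP2norm x y
  have hns2 : ∀ b y x x', ∑ a, P2' b a y x = ∑ a, P2' b a y x' :=
    fun b y x x' => hP2ns b x x' y
  -- cardinalities and equivalences
  have hcA : Fintype.card (X → A) = Fintype.card (X → A) - 1 + 1 :=
    (Nat.succ_pred_eq_of_pos Fintype.card_pos).symm
  have hcB : Fintype.card (Y → B) = Fintype.card (Y → B) - 1 + 1 :=
    (Nat.succ_pred_eq_of_pos Fintype.card_pos).symm
  have hcX : Fintype.card X = Fintype.card X - 1 + 1 :=
    (Nat.succ_pred_eq_of_pos Fintype.card_pos).symm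
  have hcY : Fintype.card Y = Fintype.card Y - 1 + 1 :=
    (Nat.succ_pred_eq_of_pos Fintype.card_pos).symm
  let eA : (X → A) ≃ Fin (Fintype.card (X → A) - 1 + 1) := Fintype.equivFinOfCardEq hcA
  let eB : (Y → B) ≃ Fin (Fintype.card (Y → B) - 1 + 1) := Fintype.equivFinOfCardEq hcB
  let eX : X ≃ Fin (Fintype.card X - 1 + 1) := Fintype.equivFinOfCardEq hcX
  let eY : Y ≃ Fin (Fintype.card Y - 1 + 1) := Fintype.equivFinOfCardEq hcY
  have hO1 : rrOB' (fun (i' : Fin (Fintype.card (X → A) - 1 + 1)) (_ : Fin (0+1))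
      (j' : Fin (Fintype.card (Y → B) - 1 + 1)) (_ : Fin (0+1)) (_ : Fin (0+1))
      (oa' : Fin (Fintype.card X - 1 + 1)) (_ : Fin (0+1))
      (_ : Fin (Fintype.card Y - 1 + 1)) =>
      Wr P1 y0 (eA.symm i') (eB.symm j') (eX.symm oa')) = (fun (i' : Fin (Fintype.card (X → A) - 1 + 1)) (_ : Fin (0+1))
      (j' : Fin (Fintype.card (Y → B) - 1 + 1)) (_ : Fin (0+1)) (_ : Fin (0+1))
      (oa' : Fin (Fintype.card X - 1 + 1)) (_ : Fin (0+1))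
      (_ : Fin (Fintype.card Y - 1 + 1)) =>
      Wr P1 y0 (eA.symm i') (eB.symm j') (eX.symm oa')) := by
    refine rrOB'_id _ ?_
    intros; rfl
  have hO2a : rrOA' (fun (i' : Fin (Fintype.card (X → A) - 1 + 1)) (_ : Fin (0+1))
      (j' : Fin (Fintype.card (Y → B) - 1 + 1)) (_ : Fin (0+1)) (_ : Fin (0+1))
      (_ : Fin (Fintype.card X - 1 + 1)) (_ : Fin (0+1))
      (ob' : Fin (Fintype.card Y - 1 + 1)) =>
      Wr P2' x0 (eB.symm j') (eA.symm i') (eY.symm ob')) = (fun (i' : Fin (Fintype.card (X → A) - 1 + 1)) (_ : Fin (0+1))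
      (j' : Fin (Fintype.card (Y → B) - 1 + 1)) (_ : Fin (0+1)) (_ : Fin (0+1))
      (_ : Fin (Fintype.card X - 1 + 1)) (_ : Fin (0+1))
      (ob' : Fin (Fintype.card Y - 1 + 1)) =>
      Wr P2' x0 (eB.symm j') (eA.symm i') (eY.symm ob')) := by
    refine rrOA'_id _ ?_
    intros; rfl
  have hO2b : rrOA' (rrOB' (fun (i' : Fin (Fintype.card (X → A) - 1 + 1)) (_ : Fin (0+1))
      (j' : Fin (Fintype.card (Y → B) - 1 + 1)) (_ : Fin (0+1)) (_ : Fin (0+1))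
      (_ : Fin (Fintype.card X - 1 + 1)) (_ : Fin (0+1))
      (ob' : Fin (Fintype.card Y - 1 + 1)) =>
      Wr P2' x0 (eB.symm j') (eA.symm i') (eY.symm ob'))) = rrOB' (fun (i' : Fin (Fintype.card (X → A) - 1 + 1)) (_ : Fin (0+1))
      (j' : Fin (Fintype.card (Y → B) - 1 + 1)) (_ : Fin (0+1)) (_ : Fin (0+1))
      (_ : Fin (Fintype.card X - 1 + 1)) (_ : Fin (0+1))
      (ob' : Fin (Fintype.card Y - 1 + 1)) =>
      Wr P2' x0 (eB.symm j') (eA.symm i') (eY.symm ob')) := by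
    refine rrOA'_id _ ?_
    intros; rfl
  refine ⟨Fintype.card (X → A) - 1, 0, Fintype.card (Y → B) - 1, 0, 0,
    Fintype.card X - 1, 0, Fintype.card Y - 1,
    (fun a x i' _ _ o' => (if eA.symm i' x = a then (1:ℝ) else 0) *
      (if eX.symm o' = x then (1:ℝ) else 0)),
    (fun b y j' _ _ o' => (if eB.symm j' y = b then (1:ℝ) else 0) *
      (if eY.symm o' = y then (1:ℝ) else 0)),
    (fun i' _ j' _ _ oa' _ _ => Wr P1 y0 (eA.symm i') (eB.symm j') (eX.symm oa')),
    (fun i' _ j' _ _ _ _ ob' => Wr P2' x0 (eB.symm j') (eA.symm i') (eY.symm ob')),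
    ?_, ?_, ?_, ?_, ?_, ?_, ?_⟩
  · -- IsLocalOps TA
    constructor
    · intro a x i' o i o'
      dsimp only
      exact mul_nonneg (by split_ifs <;> norm_num) (by split_ifs <;> norm_num)
    · intro x
      have hTx : (fun (i' : Fin (Fintype.card (X → A) - 1 + 1)) (_ : Fin (0+1))
          (_ : Fin (0+1)) (o' : Fin (Fintype.card X - 1 + 1)) => ∑ a,
            (if eA.symm i' x = a then (1:ℝ) else 0) * (if eX.symm o' = x then (1:ℝ) else 0))
          = fun _ _ _ o' => if eX.symm o' = x then (1:ℝ) else 0 := by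
        funext i' o i o'
        rw [← Finset.sum_mul, Finset.sum_ite_eq]
        simp
      show IsDetOp (fun i' o i o' => ∑ a,
        (if eA.symm i' x = a then (1:ℝ) else 0) * (if eX.symm o' = x then (1:ℝ) else 0))
      rw [hTx]
      exact myaux_isDetOp_dirac eX.symm x
  · -- IsLocalOps TB
    constructor
    · intro b y j' o i o'
      dsimp only
      exact mul_nonneg (by split_ifs <;> norm_num) (by split_ifs <;> norm_num)
    · intro y
      have hTy : (fun (j' : Fin (Fintype.card (Y → B) - 1 + 1)) (_ : Fin (0+1))
          (_ : Fin (0+1)) (o' : Fin (Fintype.card Y - 1 + 1)) => ∑ b,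
            (if eB.symm j' y = b then (1:ℝ) else 0) * (if eY.symm o' = y then (1:ℝ) else 0))
          = fun _ _ _ o' => if eY.symm o' = y then (1:ℝ) else 0 := by
        funext j' o i o'
        rw [← Finset.sum_mul, Finset.sum_ite_eq]
        simp
      show IsDetOp (fun j' o i o' => ∑ b,
        (if eB.symm j' y = b then (1:ℝ) else 0) * (if eY.symm o' = y then (1:ℝ) else 0))
      rw [hTy]
      exact myaux_isDetOp_dirac eY.symm y
  · -- IsBoxworldProcess W1
    refine ⟨?_, ?_, ?_, ?_, ?_, ?_, ?_⟩
    · intro ia' oa ib' ob ia oa' ib ob'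
      exact Wr_nonneg hP1pos _ _ _
    · -- total reduction
      have step1 : tot (fun (i' : Fin (Fintype.card (X → A) - 1 + 1)) (_ : Fin (0+1))
            (j' : Fin (Fintype.card (Y → B) - 1 + 1)) (_ : Fin (0+1)) (_ : Fin (0+1))
            (oa' : Fin (Fintype.card X - 1 + 1)) (_ : Fin (0+1))
            (_ : Fin (Fintype.card Y - 1 + 1)) =>
            Wr P1 y0 (eA.symm i') (eB.symm j') (eX.symm oa'))
          = ∑ ia' : Fin (Fintype.card (X → A) - 1 + 1),
            ∑ ib' : Fin (Fintype.card (Y → B) - 1 + 1),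
            ∑ oa' : Fin (Fintype.card X - 1 + 1),
            ∑ _ob' : Fin (Fintype.card Y - 1 + 1),
            Wr P1 y0 (eA.symm ia') (eB.symm ib') (eX.symm oa') := by
        simp only [tot, myaux_sum_fin01]
      rw [step1]
      have step2 : ∀ (ia' : Fin (Fintype.card (X → A) - 1 + 1))
          (ib' : Fin (Fintype.card (Y → B) - 1 + 1))
          (oa' : Fin (Fintype.card X - 1 + 1)),
          (∑ _ob' : Fin (Fintype.card Y - 1 + 1),
            Wr P1 y0 (eA.symm ia') (eB.symm ib') (eX.symm oa'))
          = (Fintype.card Y : ℝ) * Wr P1 y0 (eA.symm ia') (eB.symm ib') (eX.symm oa') := by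
        intro ia' ib' oa'
        rw [Finset.sum_const, Finset.card_univ, nsmul_eq_mul, Fintype.card_fin, ← hcY]
      rw [Finset.sum_congr rfl fun ia' _ => Finset.sum_congr rfl fun ib' _ =>
        Finset.sum_congr rfl fun oa' _ => step2 ia' ib' oa']
      rw [myaux_mul_sum3]
      have step3 : (∑ ia' : Fin (Fintype.card (X → A) - 1 + 1),
          ∑ ib' : Fin (Fintype.card (Y → B) - 1 + 1),
          ∑ oa' : Fin (Fintype.card X - 1 + 1),
          Wr P1 y0 (eA.symm ia') (eB.symm ib') (eX.symm oa'))
          = ∑ f : X → A, ∑ g : Y → B, ∑ x' : X, Wr P1 y0 f g x' :=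
        Fintype.sum_equiv eA.symm _ _ fun ia' => Fintype.sum_equiv eB.symm _ _ fun ib' =>
          Fintype.sum_equiv eX.symm _ _ fun oa' => rfl
      rw [step3, Wr_tot hP1pos hP1norm hP1ns]
      simp only [Fintype.card_fin, ← hcX, ← hcY]
      push_cast
      ring
    · -- rrA W1 = rrOB' (rrA W1)
      refine (rrOB'_id _ ?_).symm
      intros; rfl
    · -- rrB W1 = rrOA' (rrB W1)
      have hB : rrB (fun (i' : Fin (Fintype.card (X → A) - 1 + 1)) (_ : Fin (0+1))
            (j' : Fin (Fintype.card (Y → B) - 1 + 1)) (_ : Fin (0+1)) (_ : Fin (0+1))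
            (oa' : Fin (Fintype.card X - 1 + 1)) (_ : Fin (0+1))
            (_ : Fin (Fintype.card Y - 1 + 1)) =>
            Wr P1 y0 (eA.symm i') (eB.symm j') (eX.symm oa'))
          = rrIB' (fun i' _ j' _ _ oa' _ _ =>
            Wr P1 y0 (eA.symm i') (eB.symm j') (eX.symm oa')) := by
        unfold rrB
        rw [hO1, rrOB_id, rrIB_id]
      rw [hB]
      refine (rrOA'_id _ ?_).symm
      intro ia' oa ib' ob ia ib ob' j j'
      show (∑ jb, Wr P1 y0 (eA.symm ia') (eB.symm jb) (eX.symm j)) / _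
        = (∑ jb, Wr P1 y0 (eA.symm ia') (eB.symm jb) (eX.symm j')) / _
      congr 1
      have t1 : ∀ x' : X, (∑ jb : Fin (Fintype.card (Y → B) - 1 + 1),
          Wr P1 y0 (eA.symm ia') (eB.symm jb) x')
          = ∏ x'', margA P1 y0 (eA.symm ia' x'') x'' := by
        intro x'
        rw [Fintype.sum_equiv eB.symm (fun jb => Wr P1 y0 (eA.symm ia') (eB.symm jb) x')
          (fun g => Wr P1 y0 (eA.symm ia') g x') fun jb => rfl]
        exact Wr_sum_g hP1pos hP1ns _ _
      rw [t1, t1]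
    · -- W1 = rrOA' W1 + rrOB' W1 - rrOA' (rrOB' W1)
      rw [hO1]
      exact (add_sub_cancel_left _ _).symm
    · rw [rrOA_id, rrIA_id]
    · rw [rrOB_id, rrIB_id]
  · -- W1 = rrOB' W1
    exact hO1.symm
  · -- IsBoxworldProcess W2
    refine ⟨?_, ?_, ?_, ?_, ?_, ?_, ?_⟩
    · intro ia' oa ib' ob ia oa' ib ob'
      exact Wr_nonneg hpos2 _ _ _
    · -- total reduction
      have step1 : tot (fun (i' : Fin (Fintype.card (X → A) - 1 + 1)) (_ : Fin (0+1))
            (j' : Fin (Fintype.card (Y → B) - 1 + 1)) (_ : Fin (0+1)) (_ : Fin (0+1))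
            (_ : Fin (Fintype.card X - 1 + 1)) (_ : Fin (0+1))
            (ob' : Fin (Fintype.card Y - 1 + 1)) =>
            Wr P2' x0 (eB.symm j') (eA.symm i') (eY.symm ob'))
          = ∑ ia' : Fin (Fintype.card (X → A) - 1 + 1),
            ∑ ib' : Fin (Fintype.card (Y → B) - 1 + 1),
            ∑ _oa' : Fin (Fintype.card X - 1 + 1),
            ∑ ob' : Fin (Fintype.card Y - 1 + 1),
            Wr P2' x0 (eB.symm ib') (eA.symm ia') (eY.symm ob') := by
        simp only [tot, myaux_sum_fin01]
      rw [step1]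
      have step2 : ∀ (ia' : Fin (Fintype.card (X → A) - 1 + 1))
          (ib' : Fin (Fintype.card (Y → B) - 1 + 1)),
          (∑ _oa' : Fin (Fintype.card X - 1 + 1),
            ∑ ob' : Fin (Fintype.card Y - 1 + 1),
            Wr P2' x0 (eB.symm ib') (eA.symm ia') (eY.symm ob'))
          = (Fintype.card X : ℝ) *
            ∑ ob' : Fin (Fintype.card Y - 1 + 1),
              Wr P2' x0 (eB.symm ib') (eA.symm ia') (eY.symm ob') := by
        intro ia' ib'
        rw [Finset.sum_const, Finset.card_univ, nsmul_eq_mul, Fintype.card_fin, ← hcX]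
      rw [Finset.sum_congr rfl fun ia' _ => Finset.sum_congr rfl fun ib' _ => step2 ia' ib']
      have step2b : (∑ ia' : Fin (Fintype.card (X → A) - 1 + 1),
          ∑ ib' : Fin (Fintype.card (Y → B) - 1 + 1),
          (Fintype.card X : ℝ) * ∑ ob' : Fin (Fintype.card Y - 1 + 1),
            Wr P2' x0 (eB.symm ib') (eA.symm ia') (eY.symm ob'))
          = (Fintype.card X : ℝ) * ∑ ia' : Fin (Fintype.card (X → A) - 1 + 1),
            ∑ ib' : Fin (Fintype.card (Y → B) - 1 + 1),
            ∑ ob' : Fin (Fintype.card Y - 1 + 1),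
            Wr P2' x0 (eB.symm ib') (eA.symm ia') (eY.symm ob') := by
        simp only [← Finset.mul_sum]
      rw [step2b]
      have step3 : (∑ ia' : Fin (Fintype.card (X → A) - 1 + 1),
          ∑ ib' : Fin (Fintype.card (Y → B) - 1 + 1),
          ∑ ob' : Fin (Fintype.card Y - 1 + 1),
          Wr P2' x0 (eB.symm ib') (eA.symm ia') (eY.symm ob'))
          = ∑ g : X → A, ∑ f : Y → B, ∑ y' : Y, Wr P2' x0 f g y' :=
        Fintype.sum_equiv eA.symm _ _ fun ia' => Fintype.sum_equiv eB.symm _ _ fun ib' =>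
          Fintype.sum_equiv eY.symm _ _ fun ob' => rfl
      rw [step3, Finset.sum_comm, Wr_tot hpos2 hnorm2 hns2]
      simp only [Fintype.card_fin, ← hcX, ← hcY]
      push_cast
      ring
    · -- rrA W2 = rrOB' (rrA W2)
      have hA2 : rrA (fun (i' : Fin (Fintype.card (X → A) - 1 + 1)) (_ : Fin (0+1))
            (j' : Fin (Fintype.card (Y → B) - 1 + 1)) (_ : Fin (0+1)) (_ : Fin (0+1))
            (_ : Fin (Fintype.card X - 1 + 1)) (_ : Fin (0+1))
            (ob' : Fin (Fintype.card Y - 1 + 1)) =>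
            Wr P2' x0 (eB.symm j') (eA.symm i') (eY.symm ob'))
          = rrIA' (fun i' _ j' _ _ _ _ ob' =>
            Wr P2' x0 (eB.symm j') (eA.symm i') (eY.symm ob')) := by
        unfold rrA
        rw [hO2a, rrOA_id, rrIA_id]
      rw [hA2]
      refine (rrOB'_id _ ?_).symm
      intro ia' oa ib' ob ia oa' ib j j'
      show (∑ ja, Wr P2' x0 (eB.symm ib') (eA.symm ja) (eY.symm j)) / _
        = (∑ ja, Wr P2' x0 (eB.symm ib') (eA.symm ja) (eY.symm j')) / _
      congr 1
      have t1 : ∀ y' : Y, (∑ ja : Fin (Fintype.card (X → A) - 1 + 1),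
          Wr P2' x0 (eB.symm ib') (eA.symm ja) y')
          = ∏ y'', margA P2' x0 (eB.symm ib' y'') y'' := by
        intro y'
        rw [Fintype.sum_equiv eA.symm (fun ja => Wr P2' x0 (eB.symm ib') (eA.symm ja) y')
          (fun g => Wr P2' x0 (eB.symm ib') g y') fun ja => rfl]
        exact Wr_sum_g hpos2 hns2 _ _
      rw [t1, t1]
    · -- rrB W2 = rrOA' (rrB W2)
      refine (rrOA'_id _ ?_).symm
      intros; rfl
    · -- W2 = rrOA' W2 + rrOB' W2 - rrOA' (rrOB' W2)
      rw [hO2a, hO2b]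
      exact (add_sub_cancel_right _ _).symm
    · rw [rrOA_id, rrIA_id]
    · rw [rrOB_id, rrIB_id]
  · -- W2 = rrOA' W2
    exact hO2a.symm
  · -- correlations
    intro a b x y
    rw [myaux_corr_lin]
    have hc1 : corr (fun a x i' (_ : Fin (0+1)) (_ : Fin (0+1)) o' =>
          (if eA.symm i' x = a then (1:ℝ) else 0) * (if eX.symm o' = x then (1:ℝ) else 0))
        (fun b y j' (_ : Fin (0+1)) (_ : Fin (0+1)) o' =>
          (if eB.symm j' y = b then (1:ℝ) else 0) * (if eY.symm o' = y then (1:ℝ) else 0))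
        (fun i' _ j' _ _ oa' _ _ => Wr P1 y0 (eA.symm i') (eB.symm j') (eX.symm oa'))
        a b x y = P1 a b x y := by
      have h1 := myaux_corr_eval eA eB eX eY
        (fun f g x' _ => Wr P1 y0 f g x') a b x y
      have h2 := Wr_corr (y0 := y0) hP1pos hP1norm hP1ns a b x y
      exact h1.trans h2
    have hc2 : corr (fun a x i' (_ : Fin (0+1)) (_ : Fin (0+1)) o' =>
          (if eA.symm i' x = a then (1:ℝ) else 0) * (if eX.symm o' = x then (1:ℝ) else 0))
        (fun b y j' (_ : Fin (0+1)) (_ : Fin (0+1)) o' =>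
          (if eB.symm j' y = b then (1:ℝ) else 0) * (if eY.symm o' = y then (1:ℝ) else 0))
        (fun i' _ j' _ _ _ _ ob' => Wr P2' x0 (eB.symm j') (eA.symm i') (eY.symm ob'))
        a b x y = P2 a b x y := by
      have h1 := myaux_corr_eval eA eB eX eY
        (fun f g _ y' => Wr P2' x0 g f y') a b x y
      have hswap : (∑ f : X → A, ∑ g : Y → B, (if f x = a then (1:ℝ) else 0) *
            ((if g y = b then (1:ℝ) else 0) * Wr P2' x0 g f y))
          = ∑ g : Y → B, ∑ f : X → A, (if g y = b then (1:ℝ) else 0) *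
            ((if f x = a then (1:ℝ) else 0) * Wr P2' x0 g f y) := by
        rw [Finset.sum_comm]
        exact Finset.sum_congr rfl fun g _ => Finset.sum_congr rfl fun f _ => by ring
      have h2 := Wr_corr (y0 := x0) hpos2 hnorm2 hns2 b a y x
      exact h1.trans (hswap.trans h2)
    rw [hc1, hc2]

end Boxworld

end
end

section
/- There exist finite nonempty wire index sets I'_A, I_A, O_A, O'_A, I'_B, I_B, O_B, O'_B, each of cardinality 2, a boxworld process W over these wires, and sets of probabilistic local operations T^{A|X} on Alice's wires and T^{B|Y} on Bob's wires with classical sets A = B = X = Y = {0,1}, such that the generated correlations P̄ = (T^{A|X} ⊗ T^{B|Y}) * W satisfy LGYNI(P̄) := (1/4)·Σ_{a,b,x,y} δ_{x·(a⊕y),0}·δ_{y·(b⊕x),0}·P̄(a, b | x, y) = 11/12, where ⊕ denotes addition modulo 2. In particular, boxworld correlations violate the causal bound LGYNI ≤ 3/4 of the 'lazy guess your neighbor's input' inequality, reaching at least the value 11/12. -/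
open Finset
open scoped Classical

noncomputable section

namespace Boxworld

section Concrete

abbrev ZW8 : Type := Fin 2 → Fin 2 → Fin 2 → Fin 2 → Fin 2 → Fin 2 → Fin 2 → Fin 2 → ℤ
abbrev ZOp4 : Type := Fin 2 → Fin 2 → Fin 2 → Fin 2 → ℤ

def zWlist : List ℤ := [1, 1, 1, 0, 1, 1, 1, 0, 1, 1, 1, 1, 0, 0, 1, 1, 0, 1, 0, 2, 0, 1, 0, 2, 0, 0, 0, 0, 1, 1, 0, 0, 0, 0, 0, 0, 0, 0, 0, 0, 0, 0, 0, 0, 0, 0, 0, 0, 0, 0, 0, 0, 0, 0, 0, 0, 0, 0, 0, 0, 0, 0, 0, 0, 0, 0, 0, 1, 1, 1, 0, 1, 0, 0, 0, 0, 2, 2, 0, 0, 2, 1, 2, 0, 1, 0, 2, 0, 2, 2, 2, 2, 0, 0, 2, 2, 0, 0, 0, 0, 0, 0, 0, 0, 0, 0, 0, 0, 0, 0, 0, 0, 0, 0, 0, 0, 0, 0, 0, 0, 0, 0, 0, 0, 0, 0, 0, 0, 0, 0, 0, 0, 0, 0, 0, 0, 0, 0, 0, 0, 0, 0, 0, 0,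 0, 0, 0, 0, 0, 0, 0, 0, 0, 0, 0, 0, 0, 0, 0, 0, 0, 0, 0, 0, 0, 0, 0, 0, 0, 0, 0, 0, 0, 0, 0, 0, 0, 0, 0, 0, 0, 0, 0, 0, 0, 0, 0, 0, 0, 0, 0, 0, 0, 0, 0, 0, 0, 0, 0, 0, 0, 0, 0, 0, 0, 0, 0, 0, 0, 0, 0, 0, 0, 0, 0, 0, 0, 0, 0, 0, 0, 0, 0, 0, 0, 0, 0, 0, 0, 0, 0, 0, 0, 0, 0, 0, 0, 0, 0, 0, 0, 0, 0, 0, 0, 0, 0, 0, 0, 0, 0, 0, 0, 0, 0, 0]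

def zW : Fin 2 → Fin 2 → Fin 2 → Fin 2 → Fin 2 → Fin 2 → Fin 2 → Fin 2 → ℤ :=
  fun a b c d e f g h =>
    zWlist.getD (a.val * 128 + b.val * 64 + c.val * 32 + d.val * 16 +
      e.val * 8 + f.val * 4 + g.val * 2 + h.val) 0

def zTlist : List ℤ := [0, 0, 1, 0, 0, 0, 0, 1, 1, 0, 0, 0, 1, 0, 0, 0, 1, 0, 0, 0, 0, 0, 0, 0, 1, 0, 0, 0, 1, 0, 0, 0, 0, 0, 0, 0, 0, 0, 0, 0, 0, 0, 0, 0, 0, 0, 0, 0, 0, 0, 0, 0, 1, 0, 0, 0, 0, 0, 0, 0, 0, 0, 0, 0]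

def zT : Fin 2 → Fin 2 → Fin 2 → Fin 2 → Fin 2 → Fin 2 → ℤ :=
  fun a x i' o i o' =>
    zTlist.getD (a.val * 32 + x.val * 16 + i'.val * 8 + o.val * 4 + i.val * 2 + o'.val) 0

/-- Cast an integer 8-tensor to a real one, dividing by `k`. -/
def cW (k : ℕ) (v : ZW8) : WTen (Fin 2) (Fin 2) (Fin 2) (Fin 2) (Fin 2) (Fin 2) (Fin 2) (Fin 2) :=
  fun a b c d e f g h => ((v a b c d e f g h : ℤ) : ℝ) / (k : ℝ)

/-- Cast an integer 4-tensor to a real one, dividing by `k`. -/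
def cOp (k : ℕ) (v : ZOp4) : OpTen (Fin 2) (Fin 2) (Fin 2) (Fin 2) :=
  fun a b c d => ((v a b c d : ℤ) : ℝ) / (k : ℝ)

def sIA' (v : ZW8) : ZW8 := fun _ b c d e f g h => ∑ j, v j b c d e f g h
def sOA (v : ZW8) : ZW8 := fun a _ c d e f g h => ∑ j, v a j c d e f g h
def sIB' (v : ZW8) : ZW8 := fun a b _ d e f g h => ∑ j, v a b j d e f g h
def sOB (v : ZW8) : ZW8 := fun a b c _ e f g h => ∑ j, v a b c j e f g h
def sIA (v : ZW8) : ZW8 := fun a b c d _ f g h => ∑ j, v a b c d j f g h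
def sOA' (v : ZW8) : ZW8 := fun a b c d e _ g h => ∑ j, v a b c d e j g h
def sIB (v : ZW8) : ZW8 := fun a b c d e f _ h => ∑ j, v a b c d e f j h
def sOB' (v : ZW8) : ZW8 := fun a b c d e f g _ => ∑ j, v a b c d e f g j

lemma cW_rrIA' (k : ℕ) (v : ZW8) : rrIA' (cW k v) = cW (2 * k) (sIA' v) := by
  funext a b c d e f g h
  simp only [rrIA', sIA', cW, Fintype.card_fin]
  rw [← Finset.sum_div, div_div]
  push_cast
  rw [mul_comm]

lemma cW_rrOA (k : ℕ) (v : ZW8) : rrOA (cW k v) = cW (2 * k) (sOA v) := by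
  funext a b c d e f g h
  simp only [rrOA, sOA, cW, Fintype.card_fin]
  rw [← Finset.sum_div, div_div]
  push_cast
  rw [mul_comm]

lemma cW_rrIB' (k : ℕ) (v : ZW8) : rrIB' (cW k v) = cW (2 * k) (sIB' v) := by
  funext a b c d e f g h
  simp only [rrIB', sIB', cW, Fintype.card_fin]
  rw [← Finset.sum_div, div_div]
  push_cast
  rw [mul_comm]

lemma cW_rrOB (k : ℕ) (v : ZW8) : rrOB (cW k v) = cW (2 * k) (sOB v) := by
  funext a b c d e f g h
  simp only [rrOB, sOB, cW, Fintype.card_fin]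
  rw [← Finset.sum_div, div_div]
  push_cast
  rw [mul_comm]

lemma cW_rrIA (k : ℕ) (v : ZW8) : rrIA (cW k v) = cW (2 * k) (sIA v) := by
  funext a b c d e f g h
  simp only [rrIA, sIA, cW, Fintype.card_fin]
  rw [← Finset.sum_div, div_div]
  push_cast
  rw [mul_comm]

lemma cW_rrOA' (k : ℕ) (v : ZW8) : rrOA' (cW k v) = cW (2 * k) (sOA' v) := by
  funext a b c d e f g h
  simp only [rrOA', sOA', cW, Fintype.card_fin]
  rw [← Finset.sum_div, div_div]
  push_cast
  rw [mul_comm]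

lemma cW_rrIB (k : ℕ) (v : ZW8) : rrIB (cW k v) = cW (2 * k) (sIB v) := by
  funext a b c d e f g h
  simp only [rrIB, sIB, cW, Fintype.card_fin]
  rw [← Finset.sum_div, div_div]
  push_cast
  rw [mul_comm]

lemma cW_rrOB' (k : ℕ) (v : ZW8) : rrOB' (cW k v) = cW (2 * k) (sOB' v) := by
  funext a b c d e f g h
  simp only [rrOB', sOB', cW, Fintype.card_fin]
  rw [← Finset.sum_div, div_div]
  push_cast
  rw [mul_comm]

lemma cW_eq {a b : ℕ} {u v : ZW8} (ha : (a : ℝ) ≠ 0) (hb : (b : ℝ) ≠ 0)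
    (h : ∀ p1 p2 p3 p4 p5 p6 p7 p8 : Fin 2,
      (b : ℤ) * u p1 p2 p3 p4 p5 p6 p7 p8 = (a : ℤ) * v p1 p2 p3 p4 p5 p6 p7 p8) :
    cW a u = cW b v := by
  funext p1 p2 p3 p4 p5 p6 p7 p8
  simp only [cW]
  rw [div_eq_div_iff ha hb]
  have hr : (((b : ℤ) * u p1 p2 p3 p4 p5 p6 p7 p8 : ℤ) : ℝ)
      = (((a : ℤ) * v p1 p2 p3 p4 p5 p6 p7 p8 : ℤ) : ℝ) := by exact_mod_cast h p1 p2 p3 p4 p5 p6 p7 p8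
  push_cast at hr
  linear_combination hr

lemma cW_five {u v w z : ZW8}
    (h : ∀ p1 p2 p3 p4 p5 p6 p7 p8 : Fin 2,
      4 * u p1 p2 p3 p4 p5 p6 p7 p8 =
        2 * v p1 p2 p3 p4 p5 p6 p7 p8 + 2 * w p1 p2 p3 p4 p5 p6 p7 p8
          - z p1 p2 p3 p4 p5 p6 p7 p8) :
    cW 3 u = cW (2 * 3) v + cW (2 * 3) w - cW (2 * (2 * 3)) z := by
  funext p1 p2 p3 p4 p5 p6 p7 p8
  have step : (cW (2 * 3) v + cW (2 * 3) w - cW (2 * (2 * 3)) z) p1 p2 p3 p4 p5 p6 p7 p8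
      = cW (2 * 3) v p1 p2 p3 p4 p5 p6 p7 p8 + cW (2 * 3) w p1 p2 p3 p4 p5 p6 p7 p8
        - cW (2 * (2 * 3)) z p1 p2 p3 p4 p5 p6 p7 p8 := rfl
  rw [step]
  simp only [cW]
  have hr : ((4 * u p1 p2 p3 p4 p5 p6 p7 p8 : ℤ) : ℝ)
      = ((2 * v p1 p2 p3 p4 p5 p6 p7 p8 + 2 * w p1 p2 p3 p4 p5 p6 p7 p8
          - z p1 p2 p3 p4 p5 p6 p7 p8 : ℤ) : ℝ) := by exact_mod_cast h p1 p2 p3 p4 p5 p6 p7 p8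
  push_cast at hr ⊢
  linear_combination (1 / 12 : ℝ) * hr

def sOpI' (v : ZOp4) : ZOp4 := fun _ o i o' => ∑ j, v j o i o'
def sOpO (v : ZOp4) : ZOp4 := fun i' _ i o' => ∑ j, v i' j i o'
def sOpI (v : ZOp4) : ZOp4 := fun i' o _ o' => ∑ j, v i' o j o'
def sOpO' (v : ZOp4) : ZOp4 := fun i' o i _ => ∑ j, v i' o i j

lemma cOp_rrOpI' (k : ℕ) (v : ZOp4) : rrOpI' (cOp k v) = cOp (2 * k) (sOpI' v) := by
  funext a b c d
  simp only [rrOpI', sOpI', cOp, Fintype.card_fin]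
  rw [← Finset.sum_div, div_div]
  push_cast
  rw [mul_comm]

lemma cOp_rrOpO (k : ℕ) (v : ZOp4) : rrOpO (cOp k v) = cOp (2 * k) (sOpO v) := by
  funext a b c d
  simp only [rrOpO, sOpO, cOp, Fintype.card_fin]
  rw [← Finset.sum_div, div_div]
  push_cast
  rw [mul_comm]

lemma cOp_rrOpI (k : ℕ) (v : ZOp4) : rrOpI (cOp k v) = cOp (2 * k) (sOpI v) := by
  funext a b c d
  simp only [rrOpI, sOpI, cOp, Fintype.card_fin]
  rw [← Finset.sum_div, div_div]
  push_cast
  rw [mul_comm]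

lemma cOp_rrOpO' (k : ℕ) (v : ZOp4) : rrOpO' (cOp k v) = cOp (2 * k) (sOpO' v) := by
  funext a b c d
  simp only [rrOpO', sOpO', cOp, Fintype.card_fin]
  rw [← Finset.sum_div, div_div]
  push_cast
  rw [mul_comm]

lemma cOp_eq {a b : ℕ} {u v : ZOp4} (ha : (a : ℝ) ≠ 0) (hb : (b : ℝ) ≠ 0)
    (h : ∀ p1 p2 p3 p4 : Fin 2,
      (b : ℤ) * u p1 p2 p3 p4 = (a : ℤ) * v p1 p2 p3 p4) :
    cOp a u = cOp b v := by
  funext p1 p2 p3 p4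
  simp only [cOp]
  rw [div_eq_div_iff ha hb]
  have hr : (((b : ℤ) * u p1 p2 p3 p4 : ℤ) : ℝ)
      = (((a : ℤ) * v p1 p2 p3 p4 : ℤ) : ℝ) := by exact_mod_cast h p1 p2 p3 p4
  push_cast at hr
  linear_combination hr

/-- The deterministic operation `∑ a, zT a x`. -/
def zS (x : Fin 2) : ZOp4 := fun i' o i o' => ∑ a, zT a x i' o i o'

/-- The (3 ×) integer correlations. -/
def zcorr (a b x y : Fin 2) : ℤ :=
  ∑ ia', ∑ oa, ∑ ib', ∑ ob, ∑ ia, ∑ oa', ∑ ib, ∑ ob',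
    zT a x ia' oa ia oa' * zT b y ib' ob ib ob' * zW ia' oa ib' ob ia oa' ib ob'

lemma zW_isBoxworld : IsBoxworldProcess (cW 3 zW) := by
  refine ⟨?_, ?_, ?_, ?_, ?_, ?_, ?_⟩
  · intro a b c d e f g h
    have key : ∀ a b c d e f g h : Fin 2, (0:ℤ) ≤ zW a b c d e f g h := by decide
    simp only [cW]
    apply div_nonneg
    · exact_mod_cast key a b c d e f g h
    · norm_num
  · have key : (∑ a, ∑ b, ∑ c, ∑ d, ∑ e, ∑ f, ∑ g, ∑ h,
        zW a b c d e f g h : ℤ) = 48 := by decide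
    have key2 : (∑ a, ∑ b, ∑ c, ∑ d, ∑ e, ∑ f, ∑ g, ∑ h,
        ((zW a b c d e f g h : ℤ) : ℝ)) = 48 := by exact_mod_cast key
    simp only [tot, cW, Fintype.card_fin, ← Finset.sum_div]
    rw [key2]
    norm_num
  · simp only [rrA, cW_rrOA', cW_rrOA, cW_rrIA, cW_rrIA', cW_rrOB']
    exact cW_eq (by norm_num) (by norm_num) (by decide)
  · simp only [rrB, cW_rrOB', cW_rrOB, cW_rrIB, cW_rrIB', cW_rrOA']
    exact cW_eq (by norm_num) (by norm_num) (by decide)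
  · rw [cW_rrOA' 3 zW, cW_rrOB' 3 zW, cW_rrOA' (2 * 3) (sOB' zW)]
    exact cW_five (by decide)
  · simp only [cW_rrOA, cW_rrIA]
    exact cW_eq (by norm_num) (by norm_num) (by decide)
  · simp only [cW_rrOB, cW_rrIB]
    exact cW_eq (by norm_num) (by norm_num) (by decide)

lemma zT_localOps : IsLocalOps (fun a x => cOp 1 (zT a x)) := by
  constructor
  · intro a x i' o i o'
    have key : ∀ a x i' o i o' : Fin 2, (0:ℤ) ≤ zT a x i' o i o' := by decide
    simp only [cOp]
    apply div_nonneg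
    · exact_mod_cast key a x i' o i o'
    · norm_num
  · intro x
    have hsum : (fun i' o i o' => ∑ a, cOp 1 (zT a x) i' o i o') = cOp 1 (zS x) := by
      funext i' o i o'
      simp only [cOp, zS, ← Finset.sum_div]
      push_cast
      rfl
    show IsDetOp (fun i' o i o' => ∑ a, cOp 1 (zT a x) i' o i o')
    rw [hsum]
    refine ⟨?_, ?_, ?_⟩
    · have key : ∀ x : Fin 2, (∑ a, ∑ b, ∑ c, ∑ d, zS x a b c d : ℤ) = 4 := by decide
      have key2 : (∑ a, ∑ b, ∑ c, ∑ d, ((zS x a b c d : ℤ) : ℝ)) = 4 := by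
        exact_mod_cast key x
      simp only [totOp, cOp, Fintype.card_fin, ← Finset.sum_div]
      rw [key2]
      norm_num
    · simp only [cOp_rrOpO', cOp_rrOpI, cOp_rrOpO, cOp_rrOpI']
      refine cOp_eq (by norm_num) (by norm_num) ?_
      have key : ∀ x p1 p2 p3 p4 : Fin 2,
          ((2 * (2 * (2 * (2 * 1))) : ℕ) : ℤ) * sOpI (sOpO' (zS x)) p1 p2 p3 p4 =
            ((2 * (2 * 1) : ℕ) : ℤ) *
              sOpI' (sOpI (sOpO (sOpO' (zS x)))) p1 p2 p3 p4 := by decide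
      exact key x
    · simp only [cOp_rrOpO', cOp_rrOpO]
      refine cOp_eq (by norm_num) (by norm_num) ?_
      have key : ∀ x p1 p2 p3 p4 : Fin 2,
          ((2 * (2 * 1) : ℕ) : ℤ) * sOpO' (zS x) p1 p2 p3 p4 =
            ((2 * 1 : ℕ) : ℤ) * sOpO (sOpO' (zS x)) p1 p2 p3 p4 := by decide
      exact key x

lemma corr_cast (a b x y : Fin 2) :
    corr (fun a x => cOp 1 (zT a x)) (fun b y => cOp 1 (zT b y)) (cW 3 zW) a b x y
      = ((zcorr a b x y : ℤ) : ℝ) / 3 := by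
  simp only [corr, zcorr, cOp, cW, Nat.cast_one, div_one, ← mul_div_assoc,
    ← Finset.sum_div]
  push_cast
  rfl

end Concrete

theorem statement_18 :
    ∃ (W : WTen (Fin 2) (Fin 2) (Fin 2) (Fin 2) (Fin 2) (Fin 2) (Fin 2) (Fin 2))
      (TA TB : Fin 2 → Fin 2 → OpTen (Fin 2) (Fin 2) (Fin 2) (Fin 2)),
      IsBoxworldProcess W ∧ IsLocalOps TA ∧ IsLocalOps TB ∧
      (1 / 4 : ℝ) * ∑ a, ∑ b, ∑ x, ∑ y,
          (if x * (a + y) = 0 then (1 : ℝ) else 0) *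
            (if y * (b + x) = 0 then (1 : ℝ) else 0) *
            corr TA TB W a b x y = 11 / 12 := by
  refine ⟨cW 3 zW, (fun a x => cOp 1 (zT a x)), (fun b y => cOp 1 (zT b y)),
    zW_isBoxworld, zT_localOps, zT_localOps, ?_⟩
  have key : (∑ a : Fin 2, ∑ b : Fin 2, ∑ x : Fin 2, ∑ y : Fin 2,
      (if x * (a + y) = 0 then (1 : ℤ) else 0) *
        (if y * (b + x) = 0 then (1 : ℤ) else 0) * zcorr a b x y) = 11 := by decide
  have key2 : (∑ a : Fin 2, ∑ b : Fin 2, ∑ x : Fin 2, ∑ y : Fin 2,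
      ((if x * (a + y) = 0 then (1 : ℤ) else 0 : ℤ) : ℝ) *
        ((if y * (b + x) = 0 then (1 : ℤ) else 0 : ℤ) : ℝ) *
        ((zcorr a b x y : ℤ) : ℝ)) = 11 := by exact_mod_cast key
  have hif : ∀ (p : Prop) (inst : Decidable p),
      (if p then (1 : ℝ) else 0) = (((if p then (1 : ℤ) else 0) : ℤ) : ℝ) := by
    intro p inst
    split <;> simp
  simp only [corr_cast, hif, ← mul_div_assoc, ← Finset.sum_div]
  rw [key2]
  norm_num


end Boxworld

end
end

section
/- There exist finite nonempty wire index sets I'_A, I_A, O_A, O'_A, I'_B, I_B, O_B, O'_B, each of cardinality 2, a boxworld process W over these wires, a set of probabilistic local operations T^{A|X} on Alice's wires with classical sets A = X = {0,1}, and a set of probabilistic local operations T^{B|YY'} on Bob's wires with classical outcome set B = {0,1} and classical input set {0,1}×{0,1} (inputs (y, y')), such that the generated correlations P̄ = (T^{A|X} ⊗ T^{B|YY'}) * W satisfy OCB(P̄) := (1/8)·Σ_{a,b,x,y,y'} δ_{(y'⊕1)·(a⊕y),0}·δ_{y'·(b⊕x),0}·P̄(a, b | x, y, y') = 1, where ⊕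 denotes addition modulo 2. That is, boxworld correlations attain the algebraic maximum of the Oreshkov–Costa–Brukner expression, whose causal bound is 3/4. -/
open Finset
open scoped Classical

noncomputable section

namespace Boxworld

/-! ### Explicit solution attaining the algebraic maximum of the OCB expression -/

/-- The boxworld process: if `i_B = 0` it enforces `o_B' + o_B = i_A' + o_A`
(a box-outcome-masked channel from Bob's message to Alice), and if `i_B = 1`
it enforces `o_A' + o_A = i_B' + o_B` (a masked channel from Alice to Bob). -/
noncomputable def Wsol : WTen (Fin 2) (Fin 2) (Fin 2) (Fin 2) (Fin 2) (Fin 2) (Fin 2) (Fin 2) :=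
  fun ia' oa ib' ob _ oa' ib ob' =>
    if ib = 0 then (if ob' + ob = ia' + oa then (1 : ℝ)/8 else 0)
    else (if oa' + oa = ib' + ob then (1 : ℝ)/8 else 0)

/-- The constant tensor with value `1/16`. -/
noncomputable def Wc : WTen (Fin 2) (Fin 2) (Fin 2) (Fin 2) (Fin 2) (Fin 2) (Fin 2) (Fin 2) :=
  fun _ _ _ _ _ _ _ _ => (1 : ℝ)/16

/-- Intermediate: `rrOA' Wsol`. -/
noncomputable def W1A : WTen (Fin 2) (Fin 2) (Fin 2) (Fin 2) (Fin 2) (Fin 2) (Fin 2) (Fin 2) :=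
  fun ia' oa _ ob _ _ ib ob' =>
    if ib = 0 then (if ob' + ob = ia' + oa then (1 : ℝ)/8 else 0) else 1/16

/-- Intermediate: `rrOB' Wsol`. -/
noncomputable def W1B : WTen (Fin 2) (Fin 2) (Fin 2) (Fin 2) (Fin 2) (Fin 2) (Fin 2) (Fin 2) :=
  fun _ oa ib' ob _ oa' ib _ =>
    if ib = 0 then (1 : ℝ)/16 else (if oa' + oa = ib' + ob then (1 : ℝ)/8 else 0)

/-- Alice's operations: `i_A := 0`, `o_A' := x + o_A`, outcome `a := i_A' + o_A`. -/
noncomputable def TAsol : Fin 2 → Fin 2 → OpTen (Fin 2) (Fin 2) (Fin 2) (Fin 2) :=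
  fun a x ia' oa ia oa' => if ia = 0 ∧ oa' = x + oa ∧ a = ia' + oa then (1 : ℝ) else 0

/-- Bob's operations: `i_B := y'`, `o_B' := y + o_B`, outcome `b := i_B' + o_B`. -/
noncomputable def TBsol : Fin 2 → Fin 2 × Fin 2 → OpTen (Fin 2) (Fin 2) (Fin 2) (Fin 2) :=
  fun b yy ib' ob ib ob' => if ib = yy.2 ∧ ob' = yy.1 + ob ∧ b = ib' + ob then (1 : ℝ) else 0

section ConstLemmas

lemma rrIA'_const : rrIA' Wc = Wc := by
  funext a b c d e f g h
  simp [rrIA', Wc, Fin.sum_univ_two, Fintype.card_fin]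

lemma rrIA_const : rrIA Wc = Wc := by
  funext a b c d e f g h
  simp [rrIA, Wc, Fin.sum_univ_two, Fintype.card_fin]

lemma rrOA'_const : rrOA' Wc = Wc := by
  funext a b c d e f g h
  simp [rrOA', Wc, Fin.sum_univ_two, Fintype.card_fin]

lemma rrOB'_const : rrOB' Wc = Wc := by
  funext a b c d e f g h
  simp [rrOB', Wc, Fin.sum_univ_two, Fintype.card_fin]

lemma rrIB'_const : rrIB' Wc = Wc := by
  funext a b c d e f g h
  simp [rrIB', Wc, Fin.sum_univ_two, Fintype.card_fin]

lemma rrIB_const : rrIB Wc = Wc := by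
  funext a b c d e f g h
  simp [rrIB, Wc, Fin.sum_univ_two, Fintype.card_fin]

end ConstLemmas

section StepLemmas

set_option maxHeartbeats 2000000

lemma h_rrOA' : rrOA' Wsol = W1A := by
  funext ia' oa ib' ob ia oa' ib ob'
  simp only [rrOA', Wsol, W1A, Fin.sum_univ_two, Fintype.card_fin]
  fin_cases ib <;> fin_cases oa <;> fin_cases ib' <;> fin_cases ob <;>
    fin_cases ia' <;> fin_cases ob' <;>
    norm_num (config := { decide := true })

lemma h_rrOA_W1A : rrOA W1A = Wc := by
  funext ia' oa ib' ob ia oa' ib ob'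
  simp only [rrOA, W1A, Wc, Fin.sum_univ_two, Fintype.card_fin]
  fin_cases ib <;> fin_cases ia' <;> fin_cases ob <;> fin_cases ob' <;>
    norm_num (config := { decide := true })

lemma h_rrOB' : rrOB' Wsol = W1B := by
  funext ia' oa ib' ob ia oa' ib ob'
  simp only [rrOB', Wsol, W1B, Fin.sum_univ_two, Fintype.card_fin]
  fin_cases ib <;> fin_cases oa <;> fin_cases ib' <;> fin_cases ob <;>
    fin_cases ia' <;> fin_cases oa' <;>
    norm_num (config := { decide := true })

lemma h_rrOB_W1B : rrOB W1B = Wc := by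
  funext ia' oa ib' ob ia oa' ib ob'
  simp only [rrOB, W1B, Wc, Fin.sum_univ_two, Fintype.card_fin]
  fin_cases ib <;> fin_cases ib' <;> fin_cases oa <;> fin_cases oa' <;>
    norm_num (config := { decide := true })

lemma h_rrOA'_W1B : rrOA' W1B = Wc := by
  funext ia' oa ib' ob ia oa' ib ob'
  simp only [rrOA', W1B, Wc, Fin.sum_univ_two, Fintype.card_fin]
  fin_cases ib <;> fin_cases ib' <;> fin_cases oa <;> fin_cases ob <;>
    norm_num (config := { decide := true })

lemma h_rrOA_W : rrOA Wsol = Wc := by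
  funext ia' oa ib' ob ia oa' ib ob'
  simp only [rrOA, Wsol, Wc, Fin.sum_univ_two, Fintype.card_fin]
  fin_cases ib <;> fin_cases ia' <;> fin_cases ib' <;> fin_cases ob <;>
    fin_cases oa' <;> fin_cases ob' <;>
    norm_num (config := { decide := true })

lemma h_rrOB_W : rrOB Wsol = Wc := by
  funext ia' oa ib' ob ia oa' ib ob'
  simp only [rrOB, Wsol, Wc, Fin.sum_univ_two, Fintype.card_fin]
  fin_cases ib <;> fin_cases ia' <;> fin_cases ib' <;> fin_cases oa <;>
    fin_cases oa' <;> fin_cases ob' <;>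
    norm_num (config := { decide := true })

lemma h_rrA : rrA Wsol = Wc := by
  show rrIA' (rrIA (rrOA (rrOA' Wsol))) = Wc
  rw [h_rrOA', h_rrOA_W1A, rrIA_const, rrIA'_const]

lemma h_rrB : rrB Wsol = Wc := by
  show rrIB' (rrIB (rrOB (rrOB' Wsol))) = Wc
  rw [h_rrOB', h_rrOB_W1B, rrIB_const, rrIB'_const]

end StepLemmas

set_option maxHeartbeats 4000000 in
lemma Wsol_boxworld : IsBoxworldProcess Wsol := by
  refine ⟨?_, ?_, ?_, ?_, ?_, ?_, ?_⟩
  · intro ia' oa ib' ob ia oa' ib ob'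
    unfold Wsol
    split <;> split <;> norm_num
  · simp only [tot, Wsol, Fin.sum_univ_two, Fintype.card_fin]
    norm_num (config := { decide := true })
  · rw [h_rrA, rrOB'_const]
  · rw [h_rrB, rrOA'_const]
  · have hc : rrOA' (rrOB' Wsol) = Wc := by rw [h_rrOB', h_rrOA'_W1B]
    rw [hc, h_rrOA', h_rrOB']
    funext ia' oa ib' ob ia oa' ib ob'
    show Wsol ia' oa ib' ob ia oa' ib ob' =
      W1A ia' oa ib' ob ia oa' ib ob' + W1B ia' oa ib' ob ia oa' ib ob' -
        Wc ia' oa ib' ob ia oa' ib ob'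
    simp only [Wsol, W1A, W1B, Wc]
    by_cases h : ib = 0 <;> simp [h]
  · rw [h_rrOA_W, rrIA_const]
  · rw [h_rrOB_W, rrIB_const]

set_option maxHeartbeats 4000000 in
lemma TAsol_localops : IsLocalOps TAsol := by
  constructor
  · intro a x i' o i o'
    unfold TAsol
    split <;> norm_num
  · intro x
    refine ⟨?_, ?_, ?_⟩
    · simp only [totOp, TAsol, Fin.sum_univ_two, Fintype.card_fin]
      fin_cases x <;> norm_num (config := { decide := true })
    · funext i' o i o'
      simp only [rrOpI, rrOpI', rrOpO, rrOpO', TAsol, Fin.sum_univ_two, Fintype.card_fin]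
      fin_cases x <;> fin_cases i' <;> fin_cases o <;> fin_cases i <;> fin_cases o' <;>
        norm_num (config := { decide := true })
    · funext i' o i o'
      simp only [rrOpO, rrOpO', TAsol, Fin.sum_univ_two, Fintype.card_fin]
      fin_cases x <;> fin_cases i' <;> fin_cases o <;> fin_cases i <;> fin_cases o' <;>
        norm_num (config := { decide := true })

set_option maxHeartbeats 4000000 in
lemma TBsol_localops : IsLocalOps TBsol := by
  constructor
  · intro b yy i' o i o'
    unfold TBsol
    split <;> norm_num
  · rintro ⟨y, yp⟩
    refine ⟨?_, ?_, ?_⟩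
    · simp only [totOp, TBsol, Fin.sum_univ_two, Fintype.card_fin]
      fin_cases y <;> fin_cases yp <;> norm_num (config := { decide := true })
    · funext i' o i o'
      simp only [rrOpI, rrOpI', rrOpO, rrOpO', TBsol, Fin.sum_univ_two, Fintype.card_fin]
      fin_cases y <;> fin_cases yp <;> fin_cases i' <;> fin_cases o <;>
        fin_cases i <;> fin_cases o' <;>
        norm_num (config := { decide := true })
    · funext i' o i o'
      simp only [rrOpO, rrOpO', TBsol, Fin.sum_univ_two, Fintype.card_fin]
      fin_cases y <;> fin_cases yp <;> fin_cases i' <;> fin_cases o <;>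
        fin_cases i <;> fin_cases o' <;>
        norm_num (config := { decide := true })

set_option maxHeartbeats 8000000 in
lemma corr_y0 (a b x y : Fin 2) :
    corr TAsol TBsol Wsol a b x (y, 0) = if a = y then (1 : ℝ)/2 else 0 := by
  simp only [corr, TAsol, TBsol, Wsol, Fin.sum_univ_two]
  fin_cases a <;> fin_cases b <;> fin_cases x <;> fin_cases y <;>
    norm_num (config := { decide := true })

set_option maxHeartbeats 8000000 in
lemma corr_y1 (a b x y : Fin 2) :
    corr TAsol TBsol Wsol a b x (y, 1) = if b = x then (1 : ℝ)/2 else 0 := by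
  simp only [corr, TAsol, TBsol, Wsol, Fin.sum_univ_two]
  fin_cases a <;> fin_cases b <;> fin_cases x <;> fin_cases y <;>
    norm_num (config := { decide := true })


theorem statement_19 :
    ∃ (W : WTen (Fin 2) (Fin 2) (Fin 2) (Fin 2) (Fin 2) (Fin 2) (Fin 2) (Fin 2))
      (TA : Fin 2 → Fin 2 → OpTen (Fin 2) (Fin 2) (Fin 2) (Fin 2))
      (TB : Fin 2 → Fin 2 × Fin 2 → OpTen (Fin 2) (Fin 2) (Fin 2) (Fin 2)),
      IsBoxworldProcess W ∧ IsLocalOps TA ∧ IsLocalOps TB ∧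
      (1 / 8 : ℝ) * ∑ a, ∑ b, ∑ x, ∑ y, ∑ y',
          (if (y' + 1) * (a + y) = 0 then (1 : ℝ) else 0) *
            (if y' * (b + x) = 0 then (1 : ℝ) else 0) *
            corr TA TB W a b x (y, y') = 1 := by
  refine ⟨Wsol, TAsol, TBsol, Wsol_boxworld, TAsol_localops, TBsol_localops, ?_⟩
  simp only [Fin.sum_univ_two, corr_y0, corr_y1]
  norm_num (config := { decide := true })
end Boxworld

end
end
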